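/- arXiv:2010.06192 — 6 statements merged into one kernel-verified Lean document; each statement's English description precedes it below -/
import Mathlib

section
/- Let ε, α, L > 0, let w* ∈ ℝ^d, and set m := min_j |w*_j|. Let g : ℝ^d → ℝ^d be L-Lipschitz with g(w*) = 0. Let S ⊆ ℝ and let Q : ℝ → ℝ satisfy Q(x) = u whenever u ∈ S and |x − u| ≤ ε|u|, with Q applied componentwise to vectors. If w ∈ ℝ^d has every coordinate in S and ‖w − w*‖ ≤ (ε/(αL + ε))·m, then Q(w − α g(w)) = w; i.e., the entire SGD model weight update is cancelled by nearest rounding. (Theorem 1, first part.) -/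
open scoped RealInnerProductSpace BigOperators

/-! Write `D = ‖w - w⋆‖`. Since `g w⋆ = 0`, every coordinate of the update `α g(w)` has size at
most `α L D`, while every coordinate of `w` has size at least `m - D`. The bound on `D` is exactly
`α L D ≤ ε (m - D)`, so each updated coordinate lies in the rounding interval of `w j`. -/

lemma abs_le_mul_abs_of_abs_sub_le {ε c D m x u ustar : ℝ} (hε : 0 ≤ ε)
    (hx : |x| ≤ c * D) (hu : |u - ustar| ≤ D) (hm : m ≤ |ustar|)
    (hD : D * (c + ε) ≤ ε * m) : |x| ≤ ε * |u| := by
  have hu_lower : m - D ≤ |u| := by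
    have := abs_sub_abs_le_abs_sub ustar u
    rw [abs_sub_comm] at this
    linarith
  calc |x| ≤ c * D := hx
    _ ≤ ε * (m - D) := by linarith
    _ ≤ ε * |u| := mul_le_mul_of_nonneg_left hu_lower hε

theorem nearest_rounding_cancels_update_general
    {d : ℕ} (ε α L : ℝ) (hε : 0 < ε) (hα : 0 < α) (hL : 0 < L)
    (wstar : EuclideanSpace ℝ (Fin d)) (m : ℝ) (hm : m = ⨅ j, |wstar j|)
    (g : EuclideanSpace ℝ (Fin d) → EuclideanSpace ℝ (Fin d))
    (hg : ∀ u v, ‖g u - g v‖ ≤ L * ‖u - v‖)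
    (hgstar : g wstar = 0)
    (S : Set ℝ) (Q : ℝ → ℝ)
    (hQ : ∀ x u, u ∈ S → |x - u| ≤ ε * |u| → Q x = u)
    (w : EuclideanSpace ℝ (Fin d))
    (hwS : ∀ j, w j ∈ S)
    (hdist : ‖w - wstar‖ ≤ ε / (α * L + ε) * m) :
    (fun j => Q ((w - α • g w) j)) = w := by
  have hdist' : ‖w - wstar‖ * (α * L + ε) ≤ ε * m := by
    rwa [div_mul_eq_mul_div, le_div_iff₀ (by positivity)] at hdist
  have hgw : ‖g w‖ ≤ L * ‖w - wstar‖ := by simpa [hgstar] using hg w wstar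
  funext j
  refine hQ _ _ (hwS j) ?_
  have hstep : |α * g w j| ≤ α * L * ‖w - wstar‖ := by
    rw [abs_mul, abs_of_pos hα, mul_assoc]
    exact mul_le_mul_of_nonneg_left ((PiLp.norm_apply_le (g w) j).trans hgw) hα.le
  have hmj : m ≤ |wstar j| := hm ▸ ciInf_le (Finite.bddBelow_range _) j
  rw [show (w - α • g w) j - w j = -(α * g w j) by simp, abs_neg]
  exact abs_le_mul_abs_of_abs_sub_le hε.le hstep (PiLp.norm_apply_le (w - wstar) j) hmj hdist'

/-- Theorem 1 (first part): nearest rounding cancels the entire SGD model weight update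
when the iterate is close enough to the optimum. -/
theorem nearest_rounding_cancels_update
    {d : ℕ} (hd : 0 < d) (ε α L : ℝ) (hε : 0 < ε) (hα : 0 < α) (hL : 0 < L)
    (wstar : EuclideanSpace ℝ (Fin d)) (m : ℝ) (hm : m = ⨅ j, |wstar j|)
    (g : EuclideanSpace ℝ (Fin d) → EuclideanSpace ℝ (Fin d))
    (hg : ∀ u v, ‖g u - g v‖ ≤ L * ‖u - v‖)
    (hgstar : g wstar = 0)
    (S : Set ℝ) (Q : ℝ → ℝ)
    (hQ : ∀ x u, u ∈ S → |x - u| ≤ ε * |u| → Q x = u)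
    (w : EuclideanSpace ℝ (Fin d))
    (hwS : ∀ j, w j ∈ S)
    (hdist : ‖w - wstar‖ ≤ ε / (α * L + ε) * m) :
    (fun j => Q ((w - α • g w) j)) = w :=
  nearest_rounding_cancels_update_general ε α L hε hα hL wstar m hm g hg hgstar S Q hQ w hwS hdist
end

section
/- Let ε, α, L > 0, let w* ∈ ℝ^d, and let g : ℝ^d → ℝ^d be L-Lipschitz with g(w*) = 0. If w ∈ ℝ^d satisfies ‖w − w*‖ ≤ (ε/(αL + ε))·min_j |w*_j|, then for every coordinate j ∈ {1,…,d} the SGD update is relatively small: α·|g(w)_j| ≤ ε·|w_j|. -/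
/-- `b` stays at least `m - r` in size, and `α L r ≤ ε (m - r)` is exactly `(α L + ε) r ≤ ε m`. -/
lemma mul_abs_le_mul_abs_of_abs_sub_le {ε α L m r a b bstar : ℝ} (hε : 0 ≤ ε) (hα : 0 ≤ α)
    (hden : 0 < α * L + ε) (ha : |a| ≤ L * r) (hb : |b - bstar| ≤ r) (hm : m ≤ |bstar|)
    (hr : r ≤ ε / (α * L + ε) * m) :
    α * |a| ≤ ε * |b| := by
  have hr' : (α * L + ε) * r ≤ ε * m := by
    rwa [div_mul_eq_mul_div, le_div_iff₀ hden, mul_comm] at hr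
  have hb_lower : m - r ≤ |b| := by
    linarith [abs_sub_abs_le_abs_sub bstar b, abs_sub_comm b bstar]
  calc α * |a| ≤ α * (L * r) := mul_le_mul_of_nonneg_left ha hα
    _ ≤ ε * (m - r) := by linarith
    _ ≤ ε * |b| := mul_le_mul_of_nonneg_left hb_lower hε

theorem update_relatively_small_general
    {d : ℕ} (ε α L : ℝ) (hε : 0 < ε) (hα : 0 < α) (hL : 0 < L)
    (wstar : EuclideanSpace ℝ (Fin d))
    (g : EuclideanSpace ℝ (Fin d) → EuclideanSpace ℝ (Fin d))
    (hg : ∀ u v, ‖g u - g v‖ ≤ L * ‖u - v‖)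
    (hgstar : g wstar = 0)
    (w : EuclideanSpace ℝ (Fin d))
    (hdist : ‖w - wstar‖ ≤ ε / (α * L + ε) * (⨅ j, |wstar j|)) :
    ∀ j : Fin d, α * |g w j| ≤ ε * |w j| := by
  intro j
  have hgw : ‖g w‖ ≤ L * ‖w - wstar‖ := by simpa [hgstar] using hg w wstar
  have hgj : |g w j| ≤ L * ‖w - wstar‖ := (PiLp.norm_apply_le (g w) j).trans hgw
  have hwj : |w j - wstar j| ≤ ‖w - wstar‖ := PiLp.norm_apply_le (w - wstar) j
  have hmin : (⨅ i, |wstar i|) ≤ |wstar j| := ciInf_le (Set.finite_range _).bddBelow j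
  exact mul_abs_le_mul_abs_of_abs_sub_le hε.le hα.le (by positivity) hgj hwj hmin hdist

/-- Near the optimum, each coordinate of the SGD update is relatively small
compared to the corresponding weight coordinate. -/
theorem update_relatively_small
    {d : ℕ} (hd : 0 < d) (ε α L : ℝ) (hε : 0 < ε) (hα : 0 < α) (hL : 0 < L)
    (wstar : EuclideanSpace ℝ (Fin d))
    (g : EuclideanSpace ℝ (Fin d) → EuclideanSpace ℝ (Fin d))
    (hg : ∀ u v, ‖g u - g v‖ ≤ L * ‖u - v‖)
    (hgstar : g wstar = 0)
    (w : EuclideanSpace ℝ (Fin d))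
    (hdist : ‖w - wstar‖ ≤ ε / (α * L + ε) * (⨅ j, |wstar j|)) :
    ∀ j : Fin d, α * |g w j| ≤ ε * |w j| :=
  update_relatively_small_general ε α L hε hα hL wstar g hg hgstar w hdist
end

section
/- Let ε, α, L > 0, let w* ∈ ℝ^d with m := min_j |w*_j|, and let g_1,…,g_n : ℝ^d → ℝ^d each be L-Lipschitz with g_i(w*) = 0. Let S ⊆ ℝ and Q : ℝ → ℝ satisfy Q(x) = u whenever u ∈ S and |x − u| ≤ ε|u|, with Q applied componentwise. Let σ : ℕ → {1,…,n} be any index sequence and define iterates w_{t+1} = Q(w_t − α g_{σ(t)}(w_t)). If at some time T the iterate w_T has every coordinate in S and ‖w_T − w*‖ ≤ (ε/(αL + ε))·m, then the iterates halt: w_t = w_T for all t ≥ T, and in particular ‖w_t − w*‖ = ‖w_T − w*‖ for all t ≥ T. -/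
/-!
Since `g i w* = 0` and `g i` is `L`-Lipschitz, every coordinate of the update `α • g i (w T)` is
at most `α L D` in absolute value, where `D = ‖w T - w*‖`, while every coordinate of `w T` is at
least `m - D` in absolute value. The radius `ε / (α L + ε) * m` is exactly what makes
`α L D ≤ ε (m - D)`, so each updated coordinate lies within the rounding tolerance of the
representable coordinate of `w T` and is rounded back to it. Thus `w T` is a fixed point of every
step, whichever sample is drawn.
-/

lemma WithLp.eq_of_le_of_forall_step_eq_self {p : ENNReal} {V : Type*} {w : ℕ → WithLp p V}
    {F : ℕ → WithLp p V → V} (hw : ∀ t, (w (t + 1)).ofLp = F t (w t)) {T : ℕ}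
    (hfix : ∀ t, F t (w T) = (w T).ofLp) : ∀ t, T ≤ t → w t = w T :=
  Nat.le_induction rfl fun t _ ih => WithLp.ofLp_injective p (by rw [hw, ih, hfix])

lemma mul_le_mul_sub_of_le_div_add_mul {a ε D m : ℝ} (ha : 0 ≤ a) (hε : 0 < ε)
    (h : D ≤ ε / (a + ε) * m) : a * D ≤ ε * (m - D) := by
  rw [div_mul_eq_mul_div, le_div_iff₀ (by positivity)] at h
  linarith

section EuclideanSpace

variable {ι : Type*}

lemma EuclideanSpace.round_sub_eq_self {S : Set ℝ} {Q : ℝ → ℝ} {ε : ℝ}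
    (hQfix : ∀ x u, u ∈ S → |x - u| ≤ ε * |u| → Q x = u) {u v : EuclideanSpace ℝ ι}
    (huS : ∀ j, u j ∈ S) (hv : ∀ j, |v j| ≤ ε * |u j|) :
    (fun j => Q ((u - v) j)) = u.ofLp :=
  funext fun j => hQfix _ _ (huS j) <| by
    simpa only [PiLp.sub_apply, sub_sub_cancel_left, abs_neg] using hv j

variable [Fintype ι]

lemma EuclideanSpace.abs_apply_sub_le_norm_sub (x y : EuclideanSpace ℝ ι) (j : ι) :
    |x j - y j| ≤ ‖x - y‖ := by
  simpa only [Real.norm_eq_abs, PiLp.sub_apply] using PiLp.norm_apply_le (x - y) j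

lemma EuclideanSpace.abs_smul_apply_le_of_norm_le {α L : ℝ} (hα : 0 ≤ α)
    {v x y : EuclideanSpace ℝ ι} (hv : ‖v‖ ≤ L * ‖x - y‖) (j : ι) :
    |(α • v) j| ≤ α * L * ‖x - y‖ := by
  calc |(α • v) j| = α * |v j| := by rw [PiLp.smul_apply, smul_eq_mul, abs_mul, abs_of_nonneg hα]
    _ ≤ α * ‖v‖ := by
        gcongr; simpa only [Real.norm_eq_abs] using PiLp.norm_apply_le v j
    _ ≤ α * L * ‖x - y‖ := by rw [mul_assoc]; gcongr

lemma EuclideanSpace.abs_smul_apply_le_mul_abs_of_norm_sub_le {α L ε m : ℝ} (hα : 0 ≤ α)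
    (hL : 0 ≤ L) (hε : 0 < ε) {v x y : EuclideanSpace ℝ ι} (hv : ‖v‖ ≤ L * ‖x - y‖)
    (hm : ∀ j, m ≤ |y j|) (hdist : ‖x - y‖ ≤ ε / (α * L + ε) * m) (j : ι) :
    |(α • v) j| ≤ ε * |x j| := by
  have hxj : m - ‖x - y‖ ≤ |x j| := by
    linarith [hm j, abs_sub_abs_le_abs_sub (y j) (x j), abs_sub_comm (y j) (x j),
      abs_apply_sub_le_norm_sub x y j]
  calc |(α • v) j| ≤ α * L * ‖x - y‖ := abs_smul_apply_le_of_norm_le hα hv j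
    _ ≤ ε * (m - ‖x - y‖) := mul_le_mul_sub_of_le_div_add_mul (by positivity) hε hdist
    _ ≤ ε * |x j| := by gcongr

end EuclideanSpace

theorem nearest_rounding_iterates_halt_general
    {d n : ℕ} (ε α L : ℝ) (hε : 0 < ε) (hα : 0 < α) (hL : 0 < L)
    (wstar : EuclideanSpace ℝ (Fin d)) (m : ℝ) (hm : m = ⨅ j, |wstar j|)
    (g : Fin n → EuclideanSpace ℝ (Fin d) → EuclideanSpace ℝ (Fin d))
    (hg : ∀ i, ∀ u v, ‖g i u - g i v‖ ≤ L * ‖u - v‖)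
    (hgstar : ∀ i, g i wstar = 0)
    (S : Set ℝ) (Q : ℝ → ℝ)
    (hQfix : ∀ x u, u ∈ S → |x - u| ≤ ε * |u| → Q x = u)
    (σ : ℕ → Fin n)
    (w : ℕ → EuclideanSpace ℝ (Fin d))
    (hiter : ∀ t, w (t + 1) = fun j => Q ((w t - α • g (σ t) (w t)) j))
    (T : ℕ)
    (hwTS : ∀ j, w T j ∈ S)
    (hdist : ‖w T - wstar‖ ≤ ε / (α * L + ε) * m) :
    ∀ t : ℕ, T ≤ t → w t = w T ∧ ‖w t - wstar‖ = ‖w T - wstar‖ := by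
  have hm_le : ∀ j, m ≤ |wstar j| := fun j => hm ▸ ciInf_le (Finite.bddBelow_range _) j
  have hgrad : ∀ i, ‖g i (w T)‖ ≤ L * ‖w T - wstar‖ := fun i => by
    simpa only [hgstar i, sub_zero] using hg i (w T) wstar
  have hfix : ∀ t, (fun j => Q ((w T - α • g (σ t) (w T)) j)) = (w T).ofLp := fun t =>
    EuclideanSpace.round_sub_eq_self hQfix hwTS
      (EuclideanSpace.abs_smul_apply_le_mul_abs_of_norm_sub_le hα.le hL.le hε (hgrad (σ t))
        hm_le hdist)
  intro t ht
  have hwt := WithLp.eq_of_le_of_forall_step_eq_self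
    (F := fun t p j => Q ((p - α • g (σ t) p) j)) hiter hfix t ht
  exact ⟨hwt, by rw [hwt]⟩

/-- Once a nearest-rounded SGD iterate enters the quantization noise ball with all
coordinates representable, the iterates halt there forever. -/
theorem nearest_rounding_iterates_halt
    {d n : ℕ} (hd : 0 < d) (ε α L : ℝ) (hε : 0 < ε) (hα : 0 < α) (hL : 0 < L)
    (wstar : EuclideanSpace ℝ (Fin d)) (m : ℝ) (hm : m = ⨅ j, |wstar j|)
    (g : Fin n → EuclideanSpace ℝ (Fin d) → EuclideanSpace ℝ (Fin d))
    (hg : ∀ i, ∀ u v, ‖g i u - g i v‖ ≤ L * ‖u - v‖)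
    (hgstar : ∀ i, g i wstar = 0)
    (S : Set ℝ) (Q : ℝ → ℝ)
    (hQfix : ∀ x u, u ∈ S → |x - u| ≤ ε * |u| → Q x = u)
    (σ : ℕ → Fin n)
    (w : ℕ → EuclideanSpace ℝ (Fin d))
    (hiter : ∀ t, w (t + 1) = fun j => Q ((w t - α • g (σ t) (w t)) j))
    (T : ℕ)
    (hwTS : ∀ j, w T j ∈ S)
    (hdist : ‖w T - wstar‖ ≤ ε / (α * L + ε) * m) :
    ∀ t : ℕ, T ≤ t → w t = w T ∧ ‖w t - wstar‖ = ‖w T - wstar‖ :=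
  nearest_rounding_iterates_halt_general ε α L hε hα hL wstar m hm g hg hgstar S Q hQfix σ w hiter T
    hwTS hdist
end

section
/- Let ε, L > 0, let x, w, w* ∈ ℝ^d with ‖x‖² ≤ L, let y = xᵀw*, and let Q : ℝ → ℝ satisfy |Q(u) − u| ≤ ε|u| for all u, applied componentwise to vectors. Define the fully rounded computed gradient ∇_Q := Q( Q(xᵀw − y)·x ) (outer Q componentwise). Then ‖∇_Q − (xᵀw − y)·x‖ ≤ ε(2 + ε)·L·‖w − w*‖. (Rigorous form of the paper's bound 2εL‖w − w*‖, which disregards the ε² term.) -/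
/-!
Write `e = xᵀw − y = ⟪x, w − w*⟫` and `a = Q(e)`. The error splits as
`(Q(a·x) − a·x) + (a − e)·x`; componentwise rounding bounds the first term by
`ε‖a·x‖ ≤ ε(1 + ε)|e|‖x‖`, the second is at most `ε|e|‖x‖`, and Cauchy–Schwarz gives
`|e|‖x‖ ≤ ‖x‖²‖w − w*‖ ≤ L‖w − w*‖`.
-/

open scoped RealInnerProductSpace

theorem EuclideanSpace.norm_le_norm_of_forall_norm_le {𝕜 ι : Type*} [RCLike 𝕜] [Fintype ι]
    {v u : EuclideanSpace 𝕜 ι} (h : ∀ i, ‖v i‖ ≤ ‖u i‖) : ‖v‖ ≤ ‖u‖ := by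
  rw [EuclideanSpace.norm_eq, EuclideanSpace.norm_eq]
  gcongr with i
  exact h i

section RelativeError

variable {ε : ℝ} {Q : ℝ → ℝ}

theorem abs_le_one_add_mul_abs_of_relErr (hQ : ∀ u, |Q u - u| ≤ ε * |u|) (u : ℝ) :
    |Q u| ≤ (1 + ε) * |u| := by
  have := abs_sub_abs_le_abs_sub (Q u) u
  linarith [hQ u]

theorem norm_sub_le_of_componentwise_relErr {ι : Type*} [Fintype ι] (hε : 0 ≤ ε)
    (hQ : ∀ u, |Q u - u| ≤ ε * |u|) {v u : EuclideanSpace ℝ ι} (hv : ∀ i, v i = Q (u i)) :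
    ‖v - u‖ ≤ ε * ‖u‖ := by
  rw [← Real.norm_of_nonneg hε, ← norm_smul]
  refine EuclideanSpace.norm_le_norm_of_forall_norm_le fun i => ?_
  simpa [hv i, abs_mul, abs_of_nonneg hε] using hQ (u i)

theorem norm_twice_rounded_smul_sub_le {ι : Type*} [Fintype ι] (hε : 0 ≤ ε)
    (hQ : ∀ u, |Q u - u| ≤ ε * |u|) (e : ℝ) {x g : EuclideanSpace ℝ ι}
    (hg : ∀ i, g i = Q ((Q e • x) i)) :
    ‖g - e • x‖ ≤ ε * (2 + ε) * |e| * ‖x‖ := by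
  have hround : ‖g - Q e • x‖ ≤ ε * ‖Q e • x‖ :=
    norm_sub_le_of_componentwise_relErr hε hQ hg
  have hscalar : ‖(Q e - e) • x‖ ≤ ε * |e| * ‖x‖ := by
    rw [norm_smul, Real.norm_eq_abs]
    exact mul_le_mul_of_nonneg_right (hQ e) (norm_nonneg x)
  have hQe : ‖Q e • x‖ ≤ (1 + ε) * |e| * ‖x‖ := by
    rw [norm_smul, Real.norm_eq_abs]
    exact mul_le_mul_of_nonneg_right (abs_le_one_add_mul_abs_of_relErr hQ e) (norm_nonneg x)
  calc ‖g - e • x‖ = ‖(g - Q e • x) + (Q e - e) • x‖ := by congr 1; module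
    _ ≤ ‖g - Q e • x‖ + ‖(Q e - e) • x‖ := norm_add_le _ _
    _ ≤ ε * ((1 + ε) * |e| * ‖x‖) + ε * |e| * ‖x‖ := by gcongr; exact hround.trans (by gcongr)
    _ = ε * (2 + ε) * |e| * ‖x‖ := by ring

end RelativeError

theorem fully_rounded_gradient_error_bound_general
    {d : ℕ} (ε L : ℝ) (hε : 0 < ε)
    (x w wstar : EuclideanSpace ℝ (Fin d))
    (hx : ‖x‖ ^ 2 ≤ L)
    (y : ℝ) (hy : y = ⟪x, wstar⟫)
    (Q : ℝ → ℝ) (hQ : ∀ u : ℝ, |Q u - u| ≤ ε * |u|)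
    (gradQ : EuclideanSpace ℝ (Fin d))
    (hgradQ : gradQ = fun j => Q ((Q (⟪x, w⟫ - y) • x) j)) :
    ‖gradQ - (⟪x, w⟫ - y) • x‖ ≤ ε * (2 + ε) * L * ‖w - wstar‖ := by
  have hresidual : |⟪x, w⟫ - y| * ‖x‖ ≤ L * ‖w - wstar‖ := by
    calc |⟪x, w⟫ - y| * ‖x‖ = |⟪x, w - wstar⟫| * ‖x‖ := by rw [hy, inner_sub_right]
      _ ≤ ‖x‖ * ‖w - wstar‖ * ‖x‖ := by gcongr; exact abs_real_inner_le_norm x _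
      _ = ‖x‖ ^ 2 * ‖w - wstar‖ := by ring
      _ ≤ L * ‖w - wstar‖ := by gcongr
  calc ‖gradQ - (⟪x, w⟫ - y) • x‖ ≤ ε * (2 + ε) * |⟪x, w⟫ - y| * ‖x‖ :=
        norm_twice_rounded_smul_sub_le hε.le hQ _ fun j => congrFun hgradQ j
    _ = ε * (2 + ε) * (|⟪x, w⟫ - y| * ‖x‖) := by ring
    _ ≤ ε * (2 + ε) * (L * ‖w - wstar‖) := by gcongr
    _ = ε * (2 + ε) * L * ‖w - wstar‖ := by ring

/-- Bound on the error of the fully rounded computed gradient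
`∇_Q = Q(Q(xᵀw − y)·x)` for interpolating least squares (rigorous form of the
paper's bound `2εL‖w − w*‖`). -/
theorem fully_rounded_gradient_error_bound
    {d : ℕ} (ε L : ℝ) (hε : 0 < ε) (hL : 0 < L)
    (x w wstar : EuclideanSpace ℝ (Fin d))
    (hx : ‖x‖ ^ 2 ≤ L)
    (y : ℝ) (hy : y = ⟪x, wstar⟫)
    (Q : ℝ → ℝ) (hQ : ∀ u : ℝ, |Q u - u| ≤ ε * |u|)
    (gradQ : EuclideanSpace ℝ (Fin d))
    (hgradQ : gradQ = fun j => Q ((Q (⟪x, w⟫ - y) • x) j)) :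
    ‖gradQ - (⟪x, w⟫ - y) • x‖ ≤ ε * (2 + ε) * L * ‖w - wstar‖ :=
  fully_rounded_gradient_error_bound_general ε L hε x w wstar hx y hy Q hQ gradQ hgradQ
end

section
/- Let x_1,…,x_n ∈ ℝ^d with ‖x_i‖² ≤ L, let α ≥ 0 with αL ≤ 1, and let μ ≥ 0 satisfy (1/n)Σ_i⟨x_i, v⟩² ≥ μ‖v‖² for all v ∈ ℝ^d. Let w, w* ∈ ℝ^d, let δ ≥ 0, and let η_1,…,η_n ∈ ℝ^d be perturbation vectors with ‖η_i‖ ≤ δ‖w − w*‖ for each i. Define the perturbed SGD outcomes w'_i := w − α⟨x_i, w − w*⟩·x_i + η_i. Then the expected squared distance over a uniformly random index contracts: (1/n)·Σ_{i=1}^n ‖w'_i − w*‖² ≤ (1 − αμ + 2δ + δ²)·‖w − w*‖². (With δ = 2αεL this is the paper's one-step bound E‖w_{t+1} − w*‖² ≤ (1 − αμ + 4αεL + 4α²ε²L²)‖w_t − w*‖².) -/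
/-!
An exact least-squares step `v ↦ v - α⟪x, v⟫ x` with `α‖x‖² ≤ 1` lowers `‖v‖²` by at least
`α⟪x, v⟫²`, so it is non-expansive. A perturbation of size at most `δ‖v‖` can then raise the
norm to at most `(1 + δ)‖v‖`, which costs `(2δ + δ²)‖v‖²` in the square. Averaging the
decrements `α⟪xᵢ, v⟫²` over the samples gives at least `αμ‖v‖²` by the eigenvalue bound.
-/

open scoped RealInnerProductSpace BigOperators

theorem norm_add_sq_le_of_norm_le {F : Type*} [SeminormedAddCommGroup F] {u η : F} {r s : ℝ}
    (hu : ‖u‖ ≤ r) (hη : ‖η‖ ≤ s) :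
    ‖u + η‖ ^ 2 ≤ ‖u‖ ^ 2 + 2 * r * s + s ^ 2 := by
  have hcross : ‖u‖ * ‖η‖ ≤ r * s :=
    mul_le_mul hu hη (norm_nonneg η) ((norm_nonneg u).trans hu)
  have hη_sq : ‖η‖ ^ 2 ≤ s ^ 2 := pow_le_pow_left₀ (norm_nonneg η) hη 2
  calc ‖u + η‖ ^ 2 ≤ (‖u‖ + ‖η‖) ^ 2 := pow_le_pow_left₀ (norm_nonneg _) (norm_add_le u η) 2
    _ ≤ ‖u‖ ^ 2 + 2 * r * s + s ^ 2 := by linear_combination 2 * hcross + hη_sq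

section StepBounds

variable {E : Type*} [NormedAddCommGroup E] [InnerProductSpace ℝ E]

theorem norm_sub_inner_smul_sq_le {α : ℝ} {x : E} (hα : 0 ≤ α) (hαx : α * ‖x‖ ^ 2 ≤ 1)
    (v : E) : ‖v - (α * ⟪x, v⟫) • x‖ ^ 2 ≤ ‖v‖ ^ 2 - α * ⟪x, v⟫ ^ 2 := by
  have hexpand : ‖v - (α * ⟪x, v⟫) • x‖ ^ 2 =
      ‖v‖ ^ 2 - 2 * (α * ⟪x, v⟫ ^ 2) + α * ⟪x, v⟫ ^ 2 * (α * ‖x‖ ^ 2) := by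
    rw [norm_sub_sq_real, real_inner_smul_right, norm_smul, real_inner_comm x v,
      Real.norm_eq_abs, mul_pow, sq_abs]
    ring
  have hquad : α * ⟪x, v⟫ ^ 2 * (α * ‖x‖ ^ 2) ≤ α * ⟪x, v⟫ ^ 2 :=
    mul_le_of_le_one_right (by positivity) hαx
  linarith

theorem norm_perturbed_step_sq_le {α δ : ℝ} {x v η : E} (hα : 0 ≤ α)
    (hαx : α * ‖x‖ ^ 2 ≤ 1) (hη : ‖η‖ ≤ δ * ‖v‖) :
    ‖v - (α * ⟪x, v⟫) • x + η‖ ^ 2 ≤ (1 + δ) ^ 2 * ‖v‖ ^ 2 - α * ⟪x, v⟫ ^ 2 := by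
  have hexact := norm_sub_inner_smul_sq_le hα hαx v
  have hnonexp : ‖v - (α * ⟪x, v⟫) • x‖ ≤ ‖v‖ :=
    (pow_le_pow_iff_left₀ (norm_nonneg _) (norm_nonneg v) two_ne_zero).1
      (hexact.trans (sub_le_self _ (by positivity)))
  linear_combination norm_add_sq_le_of_norm_le hnonexp hη + hexact

end StepBounds

theorem mean_le_sub_mean_of_le {ι : Type*} [Fintype ι] {f g : ι → ℝ} {c : ℝ} (hc : 0 ≤ c)
    (h : ∀ i, f i ≤ c - g i) :
    1 / (Fintype.card ι : ℝ) * ∑ i, f i ≤ c - 1 / (Fintype.card ι : ℝ) * ∑ i, g i := by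
  set N : ℝ := (Fintype.card ι : ℝ)
  have hsum : ∑ i, f i ≤ N * c - ∑ i, g i := by
    calc ∑ i, f i ≤ ∑ i, (c - g i) := Finset.sum_le_sum fun i _ => h i
      _ = N * c - ∑ i, g i := by
        rw [Finset.sum_sub_distrib, Finset.sum_const, Finset.card_univ, nsmul_eq_mul]
  calc 1 / N * ∑ i, f i ≤ 1 / N * (N * c - ∑ i, g i) :=
        mul_le_mul_of_nonneg_left hsum (by positivity)
    _ = N / N * c - 1 / N * ∑ i, g i := by ring
    _ ≤ c - 1 / N * ∑ i, g i := by gcongr; exact mul_le_of_le_one_left hc (div_self_le_one N)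

theorem perturbed_sgd_one_step_contraction_general
    {d n : ℕ} (α L μ δ : ℝ) (hα : 0 ≤ α) (hαL : α * L ≤ 1)
    (x : Fin n → EuclideanSpace ℝ (Fin d))
    (hx : ∀ i, ‖x i‖ ^ 2 ≤ L)
    (heig : ∀ v : EuclideanSpace ℝ (Fin d),
      μ * ‖v‖ ^ 2 ≤ (1 / (n : ℝ)) * ∑ i : Fin n, ⟪x i, v⟫ ^ 2)
    (w wstar : EuclideanSpace ℝ (Fin d))
    (η : Fin n → EuclideanSpace ℝ (Fin d))
    (hη : ∀ i, ‖η i‖ ≤ δ * ‖w - wstar‖)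
    (w' : Fin n → EuclideanSpace ℝ (Fin d))
    (hw' : ∀ i, w' i = w - (α * ⟪x i, w - wstar⟫) • x i + η i) :
    (1 / (n : ℝ)) * ∑ i : Fin n, ‖w' i - wstar‖ ^ 2 ≤
      (1 - α * μ + 2 * δ + δ ^ 2) * ‖w - wstar‖ ^ 2 := by
  set v := w - wstar with hv
  have hstep : ∀ i, ‖w' i - wstar‖ ^ 2 ≤ (1 + δ) ^ 2 * ‖v‖ ^ 2 - α * ⟪x i, v⟫ ^ 2 := by
    intro i
    have hαx : α * ‖x i‖ ^ 2 ≤ 1 := (mul_le_mul_of_nonneg_left (hx i) hα).trans hαL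
    have hw'i : w' i - wstar = v - (α * ⟪x i, v⟫) • x i + η i := by rw [hw' i, hv]; abel
    rw [hw'i]
    exact norm_perturbed_step_sq_le hα hαx (hη i)
  have hmean := mean_le_sub_mean_of_le (by positivity) hstep
  rw [Fintype.card_fin, ← Finset.mul_sum, mul_left_comm] at hmean
  linear_combination hmean + α * heig v

/-- One-step expected contraction of perturbed least-squares SGD: with per-sample
perturbations of relative magnitude at most `δ`, the expected squared distance to the
optimum contracts by `(1 − αμ + 2δ + δ²)`. -/
theorem perturbed_sgd_one_step_contraction
    {d n : ℕ} (α L μ δ : ℝ) (hL : 0 < L) (hα : 0 ≤ α) (hαL : α * L ≤ 1)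
    (hμ : 0 ≤ μ) (hδ : 0 ≤ δ)
    (x : Fin n → EuclideanSpace ℝ (Fin d))
    (hx : ∀ i, ‖x i‖ ^ 2 ≤ L)
    (heig : ∀ v : EuclideanSpace ℝ (Fin d),
      μ * ‖v‖ ^ 2 ≤ (1 / (n : ℝ)) * ∑ i : Fin n, ⟪x i, v⟫ ^ 2)
    (w wstar : EuclideanSpace ℝ (Fin d))
    (η : Fin n → EuclideanSpace ℝ (Fin d))
    (hη : ∀ i, ‖η i‖ ≤ δ * ‖w - wstar‖)
    (w' : Fin n → EuclideanSpace ℝ (Fin d))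
    (hw' : ∀ i, w' i = w - (α * ⟪x i, w - wstar⟫) • x i + η i) :
    (1 / (n : ℝ)) * ∑ i : Fin n, ‖w' i - wstar‖ ^ 2 ≤
      (1 - α * μ + 2 * δ + δ ^ 2) * ‖w - wstar‖ ^ 2 :=
  perturbed_sgd_one_step_contraction_general α L μ δ hα hαL x hx heig w wstar η hη w' hw'
end

section
/- Under the hypotheses of the rigorous form of Theorem 2 — interpolating least squares with ‖x_i‖² ≤ L, y_i = x_iᵀw*, eigenvalue bound (1/n)Σ_i⟨x_i, v⟩² ≥ μ‖v‖², step size 0 < α ≤ 1/L, rounding Q with |Q(u) − u| ≤ ε|u|, and iterates w_{t+1}^σ = w_t^σ − α·Q(Q(x_{σ(t)}ᵀ w_t^σ − y_{σ(t)})·x_{σ(t)}) — the expected squared distance decays exponentially: (1/n^T)·Σ_{σ ∈ {1,…,n}^T} ‖w_T^σ − w*‖² ≤ exp( −T·(αμ − 2αε(2+ε)L − α²ε²(2+ε)²L²) ) · ‖w_0 − w*‖². (This is the exponential-decay form of Theorem 2; the paper states it as exp(−αμT(1 − 4εL/μ)) after disregarding ε² terms.) -/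
/-!
With error `e = w - w*` the update is `e ↦ e - α • Q(Q(⟪x, e⟫) • x)`. Two relative roundings
move the gradient `⟪x, e⟫ • x` by at most `ε (2 + ε) |⟪x, e⟫| ‖x‖ ≤ ε (2 + ε) L ‖e‖`, so a step
is the exact step `e - α ⟪x, e⟫ • x`, which lowers `‖e‖²` by at least `α ⟪x, e⟫²` when `α ‖x‖² ≤ 1`,
plus a perturbation of size `α ε (2 + ε) L ‖e‖`. Averaging over the index and using the eigenvalue
bound gives a mean contraction `E ‖e_{t+1}‖² ≤ (1 - c) ‖e_t‖²`, with `c` the rate in the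
exponent. Since `e_t` depends only on the first `t` indices, averaging over index sequences one
index at a time yields `(1 - c)^T ≤ exp (-c T)`.
-/

open scoped RealInnerProductSpace BigOperators

open Finset

theorem abs_round_mul_round_sub_le {Q : ℝ → ℝ} {ε : ℝ} (hε : 0 ≤ ε)
    (hQ : ∀ u : ℝ, |Q u - u| ≤ ε * |u|) (r a : ℝ) :
    |Q (Q r * a) - r * a| ≤ ε * (2 + ε) * |r * a| := by
  have hQr : |Q r| ≤ (1 + ε) * |r| := by
    linarith [abs_sub_abs_le_abs_sub (Q r) r, hQ r]
  calc |Q (Q r * a) - r * a| ≤ |Q (Q r * a) - Q r * a| + |Q r * a - r * a| := abs_sub_le _ _ _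
    _ ≤ ε * |Q r * a| + ε * |r| * |a| := by
        rw [← sub_mul, abs_mul (Q r - r)]
        gcongr
        exacts [hQ _, hQ r]
    _ ≤ ε * ((1 + ε) * |r| * |a|) + ε * |r| * |a| := by rw [abs_mul]; gcongr
    _ = ε * (2 + ε) * |r * a| := by rw [abs_mul]; ring

theorem EuclideanSpace.norm_le_mul_norm_of_abs_le {ι : Type*} [Fintype ι]
    {u v : EuclideanSpace ℝ ι} {c : ℝ} (hc : 0 ≤ c) (huv : ∀ j, |u j| ≤ c * |v j|) :
    ‖u‖ ≤ c * ‖v‖ := by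
  refine (pow_le_pow_iff_left₀ (norm_nonneg u) (by positivity) two_ne_zero).mp ?_
  rw [mul_pow, EuclideanSpace.norm_sq_eq, EuclideanSpace.norm_sq_eq, mul_sum]
  gcongr with j
  simpa only [Real.norm_eq_abs, mul_pow] using pow_le_pow_left₀ (abs_nonneg _) (huv j) 2

/-- The gradient `r • x` of the least-squares loss with the residual `r` rounded in the forward
pass and each coordinate rounded in the backward pass: the paper's `Q(Q(r) x)`. -/
def roundedGrad {ι : Type*} (Q : ℝ → ℝ) (r : ℝ) (x : EuclideanSpace ℝ ι) : EuclideanSpace ℝ ι :=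
  WithLp.toLp 2 fun j => Q ((Q r • x) j)

theorem norm_roundedGrad_sub_le {ι : Type*} [Fintype ι] {Q : ℝ → ℝ} {ε : ℝ} (hε : 0 ≤ ε)
    (hQ : ∀ u : ℝ, |Q u - u| ≤ ε * |u|) (r : ℝ) (x : EuclideanSpace ℝ ι) :
    ‖roundedGrad Q r x - r • x‖ ≤ ε * (2 + ε) * |r| * ‖x‖ := by
  refine EuclideanSpace.norm_le_mul_norm_of_abs_le (by positivity) fun j => ?_
  simpa [roundedGrad, abs_mul, mul_assoc] using abs_round_mul_round_sub_le hε hQ r (x j)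

section InnerProductSpace

variable {E : Type*} [NormedAddCommGroup E] [InnerProductSpace ℝ E] {α : ℝ}

theorem norm_sub_smul_inner_smul_sq_le (hα : 0 ≤ α) {x : E} (hαx : α * ‖x‖ ^ 2 ≤ 1) (u : E) :
    ‖u - (α * ⟪x, u⟫) • x‖ ^ 2 ≤ ‖u‖ ^ 2 - α * ⟪x, u⟫ ^ 2 := by
  rw [norm_sub_sq_real, real_inner_smul_right, real_inner_comm, norm_smul, Real.norm_eq_abs,
    mul_pow, sq_abs]
  nlinarith [mul_le_mul_of_nonneg_left hαx (mul_nonneg hα (sq_nonneg ⟪u, x⟫))]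

theorem norm_sub_smul_sq_le_of_norm_sub_inner_smul_le (hα : 0 ≤ α) {x u g : E}
    (hαx : α * ‖x‖ ^ 2 ≤ 1) {η : ℝ} (hη : 0 ≤ η) (hg : ‖g - ⟪x, u⟫ • x‖ ≤ η * ‖u‖) :
    ‖u - α • g‖ ^ 2 ≤ ‖u‖ ^ 2 - α * ⟪x, u⟫ ^ 2 + (2 * α * η + α ^ 2 * η ^ 2) * ‖u‖ ^ 2 := by
  set p := u - (α * ⟪x, u⟫) • x
  have hp : ‖p‖ ^ 2 ≤ ‖u‖ ^ 2 - α * ⟪x, u⟫ ^ 2 := norm_sub_smul_inner_smul_sq_le hα hαx u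
  have hpu : ‖p‖ ≤ ‖u‖ :=
    (pow_le_pow_iff_left₀ (norm_nonneg p) (norm_nonneg u) two_ne_zero).mp
      (by nlinarith [mul_nonneg hα (sq_nonneg ⟪x, u⟫)])
  have htri : ‖u - α • g‖ ≤ ‖p‖ + α * (η * ‖u‖) :=
    calc ‖u - α • g‖ = ‖p - α • (g - ⟪x, u⟫ • x)‖ := by
          congr 1; simp only [p, smul_sub, mul_smul]; abel
      _ ≤ ‖p‖ + α * ‖g - ⟪x, u⟫ • x‖ := by
          grw [norm_sub_le, norm_smul, Real.norm_of_nonneg hα]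
      _ ≤ ‖p‖ + α * (η * ‖u‖) := by gcongr
  calc ‖u - α • g‖ ^ 2 ≤ (‖p‖ + α * (η * ‖u‖)) ^ 2 := by gcongr
    _ = ‖p‖ ^ 2 + 2 * α * η * (‖p‖ * ‖u‖) + α ^ 2 * η ^ 2 * ‖u‖ ^ 2 := by ring
    _ ≤ ‖u‖ ^ 2 - α * ⟪x, u⟫ ^ 2 + 2 * α * η * (‖u‖ * ‖u‖) + α ^ 2 * η ^ 2 * ‖u‖ ^ 2 := by
        gcongr
    _ = _ := by ring

end InnerProductSpace

theorem norm_sub_smul_roundedGrad_sq_le {ι : Type*} [Fintype ι] {Q : ℝ → ℝ} {ε α L : ℝ}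
    (hε : 0 ≤ ε) (hQ : ∀ u : ℝ, |Q u - u| ≤ ε * |u|) (hα : 0 ≤ α) (hαL : α * L ≤ 1)
    {x : EuclideanSpace ℝ ι} (hx : ‖x‖ ^ 2 ≤ L) (u : EuclideanSpace ℝ ι) :
    ‖u - α • roundedGrad Q ⟪x, u⟫ x‖ ^ 2 ≤ ‖u‖ ^ 2 - α * ⟪x, u⟫ ^ 2 +
      (2 * α * ε * (2 + ε) * L + α ^ 2 * ε ^ 2 * (2 + ε) ^ 2 * L ^ 2) * ‖u‖ ^ 2 := by
  have hL : 0 ≤ L := (sq_nonneg _).trans hx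
  have hδ : ‖roundedGrad Q ⟪x, u⟫ x - ⟪x, u⟫ • x‖ ≤ ε * (2 + ε) * L * ‖u‖ :=
    calc _ ≤ ε * (2 + ε) * |⟪x, u⟫| * ‖x‖ := norm_roundedGrad_sub_le hε hQ _ x
      _ ≤ ε * (2 + ε) * (‖x‖ * ‖u‖) * ‖x‖ := by gcongr; exact abs_real_inner_le_norm x u
      _ = ε * (2 + ε) * ‖x‖ ^ 2 * ‖u‖ := by ring
      _ ≤ ε * (2 + ε) * L * ‖u‖ := by gcongr
  have hαx : α * ‖x‖ ^ 2 ≤ 1 := by nlinarith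
  convert norm_sub_smul_sq_le_of_norm_sub_inner_smul_le hα hαx (by positivity) hδ using 3
  ring

theorem mean_norm_sub_smul_roundedGrad_sq_le {d n : ℕ} {Q : ℝ → ℝ} {ε α L μ : ℝ}
    (hε : 0 ≤ ε) (hQ : ∀ u : ℝ, |Q u - u| ≤ ε * |u|) (hα : 0 ≤ α) (hL : 0 ≤ L)
    (hαL : α * L ≤ 1) {x : Fin n → EuclideanSpace ℝ (Fin d)} (hx : ∀ i, ‖x i‖ ^ 2 ≤ L)
    (heig : ∀ v : EuclideanSpace ℝ (Fin d),
      μ * ‖v‖ ^ 2 ≤ (1 / (n : ℝ)) * ∑ i : Fin n, ⟪x i, v⟫ ^ 2)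
    (u : EuclideanSpace ℝ (Fin d)) :
    (1 / (n : ℝ)) * ∑ i, ‖u - α • roundedGrad Q ⟪x i, u⟫ (x i)‖ ^ 2 ≤
      (1 - (α * μ - 2 * α * ε * (2 + ε) * L - α ^ 2 * ε ^ 2 * (2 + ε) ^ 2 * L ^ 2)) *
        ‖u‖ ^ 2 := by
  set A := (1 + (2 * α * ε * (2 + ε) * L + α ^ 2 * ε ^ 2 * (2 + ε) ^ 2 * L ^ 2)) * ‖u‖ ^ 2
  have hA : 0 ≤ A := by positivity
  have hn : (1 / (n : ℝ)) * n ≤ 1 := by rw [one_div_mul_eq_div]; exact div_self_le_one _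
  calc (1 / (n : ℝ)) * ∑ i, ‖u - α • roundedGrad Q ⟪x i, u⟫ (x i)‖ ^ 2
      ≤ (1 / (n : ℝ)) * ∑ i, (A - α * ⟪x i, u⟫ ^ 2) := by
        gcongr with i
        linarith [norm_sub_smul_roundedGrad_sq_le hε hQ hα hαL (hx i) u]
    _ = (1 / (n : ℝ)) * n * A - α * ((1 / (n : ℝ)) * ∑ i, ⟪x i, u⟫ ^ 2) := by
        rw [sum_sub_distrib, sum_const, card_univ, Fintype.card_fin, nsmul_eq_mul, ← mul_sum]
        ring
    _ ≤ 1 * A - α * (μ * ‖u‖ ^ 2) := by gcongr ?_ * A - α * ?_; exact heig u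
    _ = _ := by ring

section Path

variable {ι X : Type*}

def sgdPath (Φ : ι → X → X) (x₀ : X) : (t : ℕ) → (Fin t → ι) → X
  | 0, _ => x₀
  | t + 1, τ => Φ (τ (Fin.last t)) (sgdPath Φ x₀ t (Fin.init τ))

theorem sgdPath_snoc (Φ : ι → X → X) (x₀ : X) {t : ℕ} (τ : Fin t → ι) (a : ι) :
    sgdPath Φ x₀ (t + 1) (Fin.snoc τ a) = Φ a (sgdPath Φ x₀ t τ) := by
  simp [sgdPath]

theorem mean_sgdPath_le [Fintype ι] {Φ : ι → X → X} (x₀ : X) {V : X → ℝ} {ρ : ℝ} (hρ : 0 ≤ ρ)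
    (hΦ : ∀ u, (1 / (Fintype.card ι : ℝ)) * ∑ a, V (Φ a u) ≤ ρ * V u) (t : ℕ) :
    (1 / (Fintype.card ι : ℝ) ^ t) * ∑ τ : Fin t → ι, V (sgdPath Φ x₀ t τ) ≤ ρ ^ t * V x₀ := by
  induction t with
  | zero => simp [sgdPath]
  | succ t ih =>
    set c := (Fintype.card ι : ℝ)
    have hsplit : ∑ τ : Fin (t + 1) → ι, V (sgdPath Φ x₀ (t + 1) τ) =
        ∑ τ : Fin t → ι, ∑ a, V (Φ a (sgdPath Φ x₀ t τ)) := by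
      rw [← (Fin.snocEquiv fun _ => ι).sum_comp, Fintype.sum_prod_type_right]
      exact sum_congr rfl fun τ _ => sum_congr rfl fun a _ => congrArg V (sgdPath_snoc Φ x₀ τ a)
    calc (1 / c ^ (t + 1)) * ∑ τ : Fin (t + 1) → ι, V (sgdPath Φ x₀ (t + 1) τ)
        = (1 / c ^ t) * ∑ τ : Fin t → ι, (1 / c) * ∑ a, V (Φ a (sgdPath Φ x₀ t τ)) := by
          rw [hsplit, ← mul_sum, pow_succ]; ring
      _ ≤ (1 / c ^ t) * ∑ τ : Fin t → ι, ρ * V (sgdPath Φ x₀ t τ) := by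
          gcongr _ * ∑ τ, ?_ with τ; exact hΦ _
      _ = ρ * ((1 / c ^ t) * ∑ τ : Fin t → ι, V (sgdPath Φ x₀ t τ)) := by rw [← mul_sum]; ring
      _ ≤ ρ * (ρ ^ t * V x₀) := by gcongr
      _ = ρ ^ (t + 1) * V x₀ := by ring

theorem eq_sgdPath {T : ℕ} {Φ : ι → X → X} {x₀ : X} {e : (Fin T → ι) → ℕ → X}
    (h0 : ∀ σ, e σ 0 = x₀) (hsucc : ∀ σ (t : Fin T), e σ (t + 1) = Φ (σ t) (e σ t))
    (σ : Fin T → ι) : ∀ t (ht : t ≤ T), e σ t = sgdPath Φ x₀ t fun i => σ (Fin.castLE ht i)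
  | 0, _ => h0 σ
  | t + 1, ht => (hsucc σ ⟨t, ht⟩).trans (congrArg _ (eq_sgdPath h0 hsucc σ t (by omega)))

end Path

theorem max_one_sub_pow_le_exp (c : ℝ) (T : ℕ) : max (1 - c) 0 ^ T ≤ Real.exp (-(T : ℝ) * c) := by
  rw [neg_mul, ← mul_neg, Real.exp_nat_mul]
  exact pow_le_pow_left₀ (le_max_right _ _)
    (max_le (Real.one_sub_le_exp_neg c) (Real.exp_pos _).le) T

theorem rounded_forward_backward_sgd_exponential_decay_general
    {d n : ℕ} (T : ℕ) (ε α L μ : ℝ) (hε : 0 < ε) (hL : 0 < L)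
    (hα : 0 < α) (hαL : α ≤ 1 / L)
    (x : Fin n → EuclideanSpace ℝ (Fin d))
    (hx : ∀ i, ‖x i‖ ^ 2 ≤ L)
    (wstar : EuclideanSpace ℝ (Fin d))
    (y : Fin n → ℝ) (hy : ∀ i, y i = ⟪x i, wstar⟫)
    (heig : ∀ v : EuclideanSpace ℝ (Fin d),
      μ * ‖v‖ ^ 2 ≤ (1 / (n : ℝ)) * ∑ i : Fin n, ⟪x i, v⟫ ^ 2)
    (Q : ℝ → ℝ) (hQ : ∀ u : ℝ, |Q u - u| ≤ ε * |u|)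
    (w0 : EuclideanSpace ℝ (Fin d))
    (w : (Fin T → Fin n) → ℕ → EuclideanSpace ℝ (Fin d))
    (hw0 : ∀ σ, w σ 0 = w0)
    (hiter : ∀ (σ : Fin T → Fin n) (t : Fin T),
      w σ ((t : ℕ) + 1) =
        w σ (t : ℕ) -
          α • (show EuclideanSpace ℝ (Fin d) from
            WithLp.toLp 2 (fun j => Q ((Q (⟪x (σ t), w σ (t : ℕ)⟫ - y (σ t)) • x (σ t)) j)))) :
    (1 / (n : ℝ) ^ T) * ∑ σ : Fin T → Fin n, ‖w σ T - wstar‖ ^ 2 ≤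
      Real.exp (-(T : ℝ) *
          (α * μ - 2 * α * ε * (2 + ε) * L - α ^ 2 * ε ^ 2 * (2 + ε) ^ 2 * L ^ 2)) *
        ‖w0 - wstar‖ ^ 2 := by
  set c := α * μ - 2 * α * ε * (2 + ε) * L - α ^ 2 * ε ^ 2 * (2 + ε) ^ 2 * L ^ 2
  set Φ : Fin n → EuclideanSpace ℝ (Fin d) → EuclideanSpace ℝ (Fin d) :=
    fun i u => u - α • roundedGrad Q ⟪x i, u⟫ (x i)
  have hαL' : α * L ≤ 1 := (le_div_iff₀ hL).mp hαL
  have herror : ∀ σ (t : Fin T), w σ (t + 1) - wstar = Φ (σ t) (w σ t - wstar) := by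
    intro σ t
    rw [hiter, hy, sub_right_comm, ← inner_sub_right]
    rfl
  have hpath : ∀ σ, w σ T - wstar = sgdPath Φ (w0 - wstar) T σ := fun σ => by
    simpa using eq_sgdPath (e := fun σ t => w σ t - wstar) (by simp [hw0]) herror σ T le_rfl
  -- `1 - c` may be negative; clipping it at `0` keeps a nonnegative factor still below `exp (-c)`.
  have hcontract : ∀ u, (1 / (Fintype.card (Fin n) : ℝ)) * ∑ i, ‖Φ i u‖ ^ 2 ≤
      max (1 - c) 0 * ‖u‖ ^ 2 := fun u => by
    grw [Fintype.card_fin, mean_norm_sub_smul_roundedGrad_sq_le hε.le hQ hα.le hL.le hαL' hx heig u,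
      ← le_max_left]
  calc (1 / (n : ℝ) ^ T) * ∑ σ : Fin T → Fin n, ‖w σ T - wstar‖ ^ 2
      ≤ max (1 - c) 0 ^ T * ‖w0 - wstar‖ ^ 2 := by
        simpa [hpath] using mean_sgdPath_le (V := fun u => ‖u‖ ^ 2) (w0 - wstar) (le_max_right _ _) hcontract T
    _ ≤ Real.exp (-(T : ℝ) * c) * ‖w0 - wstar‖ ^ 2 := by gcongr; exact max_one_sub_pow_le_exp c T

/-- Exponential-decay form of Theorem 2: SGD on interpolating least squares with
nearest rounding only in forward/backward compute has expected squared distance to the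
optimum decaying exponentially in the number of steps. -/
theorem rounded_forward_backward_sgd_exponential_decay
    {d n : ℕ} (T : ℕ) (ε α L μ : ℝ) (hε : 0 < ε) (hL : 0 < L)
    (hα : 0 < α) (hαL : α ≤ 1 / L) (hμ : 0 ≤ μ)
    (x : Fin n → EuclideanSpace ℝ (Fin d))
    (hx : ∀ i, ‖x i‖ ^ 2 ≤ L)
    (wstar : EuclideanSpace ℝ (Fin d))
    (y : Fin n → ℝ) (hy : ∀ i, y i = ⟪x i, wstar⟫)
    (heig : ∀ v : EuclideanSpace ℝ (Fin d),
      μ * ‖v‖ ^ 2 ≤ (1 / (n : ℝ)) * ∑ i : Fin n, ⟪x i, v⟫ ^ 2)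
    (Q : ℝ → ℝ) (hQ : ∀ u : ℝ, |Q u - u| ≤ ε * |u|)
    (w0 : EuclideanSpace ℝ (Fin d))
    (w : (Fin T → Fin n) → ℕ → EuclideanSpace ℝ (Fin d))
    (hw0 : ∀ σ, w σ 0 = w0)
    (hiter : ∀ (σ : Fin T → Fin n) (t : Fin T),
      w σ ((t : ℕ) + 1) =
        w σ (t : ℕ) -
          α • (show EuclideanSpace ℝ (Fin d) from
            WithLp.toLp 2 (fun j => Q ((Q (⟪x (σ t), w σ (t : ℕ)⟫ - y (σ t)) • x (σ t)) j)))) :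
    (1 / (n : ℝ) ^ T) * ∑ σ : Fin T → Fin n, ‖w σ T - wstar‖ ^ 2 ≤
      Real.exp (-(T : ℝ) *
          (α * μ - 2 * α * ε * (2 + ε) * L - α ^ 2 * ε ^ 2 * (2 + ε) ^ 2 * L ^ 2)) *
        ‖w0 - wstar‖ ^ 2 :=
  rounded_forward_backward_sgd_exponential_decay_general T ε α L μ hε hL hα hαL x hx wstar y hy heig
    Q hQ w0 w hw0 hiter
end
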